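/- arXiv:2305.13493 — 5 statements merged into one kernel-verified Lean document; each statement's English description precedes it below -/
import Mathlib

section
/- Let μ and ν be probability measures on a measurable space Ω with μ absolutely continuous with respect to ν and finite Kullback–Leibler divergence KL(μ‖ν). Let α > 0 and let D : Ω → ℝ be a measurable function that is strictly positive ν-almost everywhere, such that log∘D is μ-integrable and D is ν-integrable. Then α·∫ log(D) dμ − ∫ D dν ≤ α·KL(μ‖ν) + α·log(α) − α. -/
open MeasureTheory Real

/-! For `t > 0`, `α log t - t ≤ α log α - α` (the maximum is at `t = α`). Applied with
`t = D / (dμ/dν)` and integrated against `μ`, this bounds `α ∫ log D dμ - α KL(μ‖ν)` by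
`α log α - α + ∫ D / (dμ/dν) dμ`, and changing measure gives
`∫ D / (dμ/dν) dμ = ∫_{dμ/dν > 0} D dν ≤ ∫ D dν` because `D ≥ 0`. -/

lemma Real.mul_log_sub_le {α t : ℝ} (hα : 0 < α) (ht : 0 < t) :
    α * log t - t ≤ α * log α - α := by
  have h := mul_le_mul_of_nonneg_left (log_le_sub_one_of_pos (div_pos ht hα)) hα.le
  rw [log_div ht.ne' hα.ne', mul_sub_one, mul_div_cancel₀ t hα.ne'] at h
  linarith

lemma mul_div_eq_self_or_eq_zero {G₀ : Type*} [CommGroupWithZero G₀] (a b : G₀) :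
    a * (b / a) = b ∨ a * (b / a) = 0 := by
  rcases eq_or_ne a 0 with h | h
  · simp [h]
  · simp [mul_div_cancel₀ _ h]

namespace MeasureTheory

variable {Ω : Type*} [MeasurableSpace Ω] {μ ν : Measure Ω}

lemma Measure.toReal_rnDeriv_pos [μ.HaveLebesgueDecomposition ν] [SigmaFinite μ] (hμν : μ ≪ ν) :
    ∀ᵐ x ∂μ, 0 < (μ.rnDeriv ν x).toReal := by
  filter_upwards [Measure.rnDeriv_pos hμν, hμν.ae_le (Measure.rnDeriv_lt_top μ ν)] with x h0 htop
  exact ENNReal.toReal_pos h0.ne' htop.ne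

variable [μ.HaveLebesgueDecomposition ν] [SigmaFinite μ] {f : Ω → ℝ}

lemma integrable_div_toReal_rnDeriv (hμν : μ ≪ ν) (hf : Integrable f ν) :
    Integrable (fun x ↦ f x / (μ.rnDeriv ν x).toReal) μ := by
  have hr := (Measure.measurable_rnDeriv μ ν).ennreal_toReal.aemeasurable (μ := ν)
  refine (integrable_toReal_rnDeriv_mul_iff hμν).mp (hf.mono ?_ (.of_forall fun x ↦ ?_))
  · exact (hr.mul (hf.aemeasurable.div hr)).aestronglyMeasurable
  · rcases mul_div_eq_self_or_eq_zero (μ.rnDeriv ν x).toReal (f x) with h | h <;> simp [h]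

lemma integral_div_toReal_rnDeriv_le (hμν : μ ≪ ν) (hf₀ : 0 ≤ᵐ[ν] f) (hf : Integrable f ν) :
    ∫ x, f x / (μ.rnDeriv ν x).toReal ∂μ ≤ ∫ x, f x ∂ν := by
  rw [← integral_toReal_rnDeriv_mul hμν]
  refine integral_mono_ae ((integrable_toReal_rnDeriv_mul_iff hμν).mpr
    (integrable_div_toReal_rnDeriv hμν hf)) hf ?_
  filter_upwards [hf₀] with x (hx : 0 ≤ f x)
  rcases mul_div_eq_self_or_eq_zero (μ.rnDeriv ν x).toReal (f x) with h | h <;> rw [h]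
  exact hx

end MeasureTheory

theorem stmt3_general {Ω : Type*} [MeasurableSpace Ω] (μ ν : Measure Ω)
    [IsProbabilityMeasure μ] [IsProbabilityMeasure ν]
    (hac : μ ≪ ν)
    (hKL : Integrable (fun ω => log ((μ.rnDeriv ν ω).toReal)) μ)
    (α : ℝ) (hα : 0 < α)
    (D : Ω → ℝ)
    (hDpos : ∀ᵐ ω ∂ν, 0 < D ω)
    (hlogD : Integrable (fun ω => log (D ω)) μ)
    (hD : Integrable D ν) :
    α * ∫ ω, log (D ω) ∂μ - ∫ ω, D ω ∂ν ≤
      α * ∫ ω, log ((μ.rnDeriv ν ω).toReal) ∂μ + α * log α - α := by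
  set r : Ω → ℝ := fun ω => (μ.rnDeriv ν ω).toReal
  have hpt : ∀ᵐ ω ∂μ, α * log (D ω) - α * log (r ω) - D ω / r ω ≤ α * log α - α := by
    filter_upwards [Measure.toReal_rnDeriv_pos hac, hac.ae_le hDpos] with ω hrω hDω
    rw [← mul_sub, ← log_div hDω.ne' hrω.ne']
    exact mul_log_sub_le hα (div_pos hDω hrω)
  have hlogD' : Integrable (fun ω => α * log (D ω)) μ := hlogD.const_mul α
  have hKL' : Integrable (fun ω => α * log (r ω)) μ := hKL.const_mul α
  have hlog : Integrable (fun ω => α * log (D ω) - α * log (r ω)) μ := hlogD'.sub hKL'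
  have hdiv : Integrable (fun ω => D ω / r ω) μ := integrable_div_toReal_rnDeriv hac hD
  have hμ : ∫ ω, (α * log (D ω) - α * log (r ω) - D ω / r ω) ∂μ ≤ α * log α - α := by
    simpa using integral_mono_ae (hlog.sub hdiv) (integrable_const _) hpt
  rw [integral_sub hlog hdiv, integral_sub hlogD' hKL', integral_const_mul,
    integral_const_mul] at hμ
  linarith [integral_div_toReal_rnDeriv_le hac (hDpos.mono fun _ h ↦ h.le) hD]

/-- Let `μ, ν` be probability measures with `μ ≪ ν` and finite KL divergence
`KL(μ‖ν) = ∫ log (dμ/dν) dμ` (finiteness expressed as integrability of `log (dμ/dν)`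
with respect to `μ`). Let `α > 0` and `D` be measurable, strictly positive `ν`-a.e.,
with `log ∘ D` `μ`-integrable and `D` `ν`-integrable. Then
`α • ∫ log D dμ - ∫ D dν ≤ α • KL(μ‖ν) + α log α - α`. -/
theorem stmt3 {Ω : Type*} [MeasurableSpace Ω] (μ ν : Measure Ω)
    [IsProbabilityMeasure μ] [IsProbabilityMeasure ν]
    (hac : μ ≪ ν)
    (hKL : Integrable (fun ω => log ((μ.rnDeriv ν ω).toReal)) μ)
    (α : ℝ) (hα : 0 < α)
    (D : Ω → ℝ) (hDmeas : Measurable D)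
    (hDpos : ∀ᵐ ω ∂ν, 0 < D ω)
    (hlogD : Integrable (fun ω => log (D ω)) μ)
    (hD : Integrable D ν) :
    α * ∫ ω, log (D ω) ∂μ - ∫ ω, D ω ∂ν ≤
      α * ∫ ω, log ((μ.rnDeriv ν ω).toReal) ∂μ + α * log α - α :=
  stmt3_general μ ν hac hKL α hα D hDpos hlogD hD
end

section
/- Let μ and ν be probability measures on a measurable space Ω with μ absolutely continuous with respect to ν, finite Kullback–Leibler divergence KL(μ‖ν), and Radon–Nikodym derivative dμ/dν strictly positive ν-almost everywhere. Let α > 0. Then the supremum, over all measurable functions D : Ω → ℝ that are strictly positive ν-almost everywhere with log∘D μ-integrable and D ν-integrable, of α·∫ log(D) dμ − ∫ D dν equals α·KL(μ‖ν) + α·log(α) − α, and this supremum is attained at D = α·(dμ/dν). -/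
open MeasureTheory Real

/-! Writing `f = dμ/dν`, the inequality `log t ≤ t - 1` at `t = D / f` gives
`log D ≤ log f + D / f - 1` pointwise, and integrating against `μ = f • ν` turns
`∫ D / f dμ` into `∫ D dν`. Hence `∫ log D dμ - ∫ D dν ≤ KL(μ‖ν) - 1`, with equality at `D = f`.
The parameter `α` enters only through the rescaling `D = α • D'`, which shifts
`α ∫ log D dμ - ∫ D dν = α (∫ log D' dμ - ∫ D' dν) + α log α`. -/

lemma Real.log_le_log_add_div_sub_one {x y : ℝ} (hx : 0 < x) (hy : 0 < y) :
    log x ≤ log y + (x / y - 1) := by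
  have h := log_le_sub_one_of_pos (div_pos hx hy)
  rw [log_div hx.ne' hy.ne'] at h
  linarith

section

variable {Ω : Type*} [MeasurableSpace Ω] {μ ν : Measure Ω} {D : Ω → ℝ}

lemma log_const_mul_ae_eq {c : ℝ} (hc : 0 < c) (hD : ∀ᵐ ω ∂μ, 0 < D ω) :
    (fun ω => log (c * D ω)) =ᵐ[μ] fun ω => log c + log (D ω) := by
  filter_upwards [hD] with ω hω using log_mul hc.ne' hω.ne'

lemma integrable_log_const_mul [IsFiniteMeasure μ] {c : ℝ} (hc : 0 < c)
    (hD : ∀ᵐ ω ∂μ, 0 < D ω) (hlog : Integrable (fun ω => log (D ω)) μ) :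
    Integrable (fun ω => log (c * D ω)) μ :=
  ((integrable_const (log c)).add hlog).congr (log_const_mul_ae_eq hc hD).symm

lemma integral_log_const_mul [IsProbabilityMeasure μ] {c : ℝ} (hc : 0 < c)
    (hD : ∀ᵐ ω ∂μ, 0 < D ω) (hlog : Integrable (fun ω => log (D ω)) μ) :
    ∫ ω, log (c * D ω) ∂μ = log c + ∫ ω, log (D ω) ∂μ := by
  rw [integral_congr_ae (log_const_mul_ae_eq hc hD), integral_add (integrable_const _) hlog,
    integral_const, probReal_univ, one_smul]

variable [SigmaFinite μ] [SigmaFinite ν]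

lemma integrable_div_toReal_rnDeriv (hac : μ ≪ ν)
    (hpos : ∀ᵐ ω ∂ν, 0 < (μ.rnDeriv ν ω).toReal) (hD : Integrable D ν) :
    Integrable (fun ω => D ω / (μ.rnDeriv ν ω).toReal) μ := by
  refine (integrable_toReal_rnDeriv_mul_iff hac).1 (hD.congr ?_)
  filter_upwards [hpos] with ω hω
  field_simp

lemma integral_div_toReal_rnDeriv (hac : μ ≪ ν)
    (hpos : ∀ᵐ ω ∂ν, 0 < (μ.rnDeriv ν ω).toReal) :
    ∫ ω, D ω / (μ.rnDeriv ν ω).toReal ∂μ = ∫ ω, D ω ∂ν := by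
  rw [← integral_toReal_rnDeriv_mul hac]
  refine integral_congr_ae ?_
  filter_upwards [hpos] with ω hω
  field_simp

theorem integral_log_sub_integral_le_integral_log_rnDeriv_sub_one
    [IsProbabilityMeasure μ] (hac : μ ≪ ν) (hpos : ∀ᵐ ω ∂ν, 0 < (μ.rnDeriv ν ω).toReal)
    (hKL : Integrable (fun ω => log ((μ.rnDeriv ν ω).toReal)) μ)
    (hD_pos : ∀ᵐ ω ∂μ, 0 < D ω) (hlog : Integrable (fun ω => log (D ω)) μ)
    (hD : Integrable D ν) :
    ∫ ω, log (D ω) ∂μ - ∫ ω, D ω ∂ν ≤ ∫ ω, log ((μ.rnDeriv ν ω).toReal) ∂μ - 1 := by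
  have hquot : Integrable (fun ω => D ω / (μ.rnDeriv ν ω).toReal - 1) μ :=
    (integrable_div_toReal_rnDeriv hac hpos hD).sub (integrable_const 1)
  have hbound : ∫ ω, log (D ω) ∂μ ≤
      ∫ ω, log ((μ.rnDeriv ν ω).toReal) + (D ω / (μ.rnDeriv ν ω).toReal - 1) ∂μ := by
    refine integral_mono_ae hlog (hKL.add hquot) ?_
    filter_upwards [hac.ae_le hpos, hD_pos] with ω hf hDω
    exact log_le_log_add_div_sub_one hDω hf
  rw [integral_add hKL hquot, integral_sub (integrable_div_toReal_rnDeriv hac hpos hD)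
    (integrable_const 1), integral_div_toReal_rnDeriv hac hpos, integral_const, probReal_univ,
    one_smul] at hbound
  linarith

end

/-- Let `μ, ν` be probability measures with `μ ≪ ν`, finite KL divergence
`KL(μ‖ν) = ∫ log (dμ/dν) dμ` (finiteness expressed as integrability of `log (dμ/dν)`
with respect to `μ`), and `dμ/dν > 0` `ν`-a.e. Let `α > 0`. The supremum over all
measurable `D : Ω → ℝ` that are `ν`-a.e. strictly positive, with `log ∘ D` `μ`-integrable
and `D` `ν`-integrable, of `α • ∫ log D dμ - ∫ D dν` equals
`α • KL(μ‖ν) + α log α - α` (`IsGreatest`: it is an attained supremum), and it is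
attained at `D = α • dμ/dν`. -/
theorem stmt5 {Ω : Type*} [MeasurableSpace Ω] (μ ν : Measure Ω)
    [IsProbabilityMeasure μ] [IsProbabilityMeasure ν]
    (hac : μ ≪ ν)
    (hKL : Integrable (fun ω => log ((μ.rnDeriv ν ω).toReal)) μ)
    (hpos : ∀ᵐ ω ∂ν, 0 < (μ.rnDeriv ν ω).toReal)
    (α : ℝ) (hα : 0 < α) :
    IsGreatest
      {v : ℝ | ∃ D : Ω → ℝ, Measurable D ∧ (∀ᵐ ω ∂ν, 0 < D ω) ∧
        Integrable (fun ω => log (D ω)) μ ∧ Integrable D ν ∧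
        v = α * ∫ ω, log (D ω) ∂μ - ∫ ω, D ω ∂ν}
      (α * ∫ ω, log ((μ.rnDeriv ν ω).toReal) ∂μ + α * log α - α) ∧
    α * ∫ ω, log (α * (μ.rnDeriv ν ω).toReal) ∂μ - ∫ ω, α * (μ.rnDeriv ν ω).toReal ∂ν =
      α * ∫ ω, log ((μ.rnDeriv ν ω).toReal) ∂μ + α * log α - α := by
  have hvalue : α * ∫ ω, log (α * (μ.rnDeriv ν ω).toReal) ∂μ
      - ∫ ω, α * (μ.rnDeriv ν ω).toReal ∂ν
      = α * ∫ ω, log ((μ.rnDeriv ν ω).toReal) ∂μ + α * log α - α := by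
    rw [integral_log_const_mul hα (hac.ae_le hpos) hKL, integral_const_mul,
      Measure.integral_toReal_rnDeriv hac, probReal_univ]
    ring
  refine ⟨⟨⟨fun ω => α * (μ.rnDeriv ν ω).toReal,
    measurable_const.mul (μ.measurable_rnDeriv ν).ennreal_toReal,
    hpos.mono fun ω hω => mul_pos hα hω, integrable_log_const_mul hα (hac.ae_le hpos) hKL,
    Measure.integrable_toReal_rnDeriv.const_mul α, hvalue.symm⟩, ?_⟩, hvalue⟩
  rintro _ ⟨D, -, hD_pos, hlog, hD, rfl⟩
  have hD_posμ : ∀ᵐ ω ∂μ, 0 < D ω := hac.ae_le hD_pos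
  have hαinv := inv_pos.2 hα
  have hgibbs := integral_log_sub_integral_le_integral_log_rnDeriv_sub_one
    (D := fun ω => α⁻¹ * D ω) hac hpos hKL (hD_posμ.mono fun ω hω => mul_pos hαinv hω)
    (integrable_log_const_mul hαinv hD_posμ hlog) (hD.const_mul α⁻¹)
  rw [integral_log_const_mul hαinv hD_posμ hlog, integral_const_mul, log_inv] at hgibbs
  calc α * ∫ ω, log (D ω) ∂μ - ∫ ω, D ω ∂ν
      = α * (-log α + ∫ ω, log (D ω) ∂μ - α⁻¹ * ∫ ω, D ω ∂ν) + α * log α := by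
        field_simp
        ring
    _ ≤ α * (∫ ω, log ((μ.rnDeriv ν ω).toReal) ∂μ - 1) + α * log α := by gcongr
    _ = α * ∫ ω, log ((μ.rnDeriv ν ω).toReal) ∂μ + α * log α - α := by ring
end

section
/- Let μ and ν be probability measures on a measurable space Ω with μ absolutely continuous with respect to ν, finite Kullback–Leibler divergence KL(μ‖ν), and Radon–Nikodym derivative dμ/dν strictly positive ν-almost everywhere. Let α > 0 and let D : Ω → ℝ be measurable, strictly positive ν-almost everywhere, with log∘D μ-integrable and D ν-integrable. If α·∫ log(D) dμ − ∫ D dν = α·KL(μ‖ν) + α·log(α) − α, then D = α·(dμ/dν) ν-almost everywhere. -/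
/-!
Put `g = D / (α · dμ/dν)`. Changing measure turns `∫ D dν` into `α ∫ g dμ`, and the hypothesis
becomes `∫ log g dμ = ∫ g dμ - 1`, i.e. `∫ (g - 1 - log g) dμ = 0`. Since `log x ≤ x - 1` with
equality only at `x = 1`, this forces `g = 1` `μ`-a.e., and positivity of `dμ/dν` makes `ν ≪ μ`.
-/

open MeasureTheory Real

namespace Real

lemma eq_one_of_log_eq_sub_one {x : ℝ} (hx : 0 < x) (h : log x = x - 1) : x = 1 := by
  by_contra hne
  exact (log_lt_sub_one_of_pos hx hne).ne h

end Real

namespace MeasureTheory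

variable {Ω : Type*} [MeasurableSpace Ω] {μ ν : Measure Ω}

lemma ae_eq_one_of_integral_log_eq_integral_sub_one [IsProbabilityMeasure μ] {g : Ω → ℝ}
    (hg_pos : ∀ᵐ ω ∂μ, 0 < g ω) (hg : Integrable g μ)
    (hlog : Integrable (fun ω => log (g ω)) μ)
    (h : ∫ ω, log (g ω) ∂μ = ∫ ω, g ω ∂μ - 1) :
    ∀ᵐ ω ∂μ, g ω = 1 := by
  have hg_sub : Integrable (fun ω => g ω - 1) μ := hg.sub (integrable_const 1)
  have hgap_nonneg : 0 ≤ᵐ[μ] fun ω => g ω - 1 - log (g ω) := by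
    filter_upwards [hg_pos] with ω hω
    exact sub_nonneg.2 (log_le_sub_one_of_pos hω)
  have hgap_zero : ∫ ω, (g ω - 1 - log (g ω)) ∂μ = 0 := by
    rw [integral_sub hg_sub hlog, integral_sub hg (integrable_const 1), h]
    simp
  filter_upwards [(integral_eq_zero_iff_of_nonneg_ae hgap_nonneg (hg_sub.sub hlog)).1 hgap_zero,
    hg_pos] with ω hgap hω
  exact eq_one_of_log_eq_sub_one hω (sub_eq_zero.1 hgap).symm

namespace Measure

lemma absolutelyContinuous_of_ae_rnDeriv_ne_zero [μ.HaveLebesgueDecomposition ν] (hμν : μ ≪ ν)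
    (h : ∀ᵐ ω ∂ν, μ.rnDeriv ν ω ≠ 0) : ν ≪ μ := by
  rw [← withDensity_rnDeriv_eq μ ν hμν]
  exact withDensity_absolutelyContinuous' (measurable_rnDeriv μ ν).aemeasurable h

lemma toReal_rnDeriv_mul_div_ae_eq {f : Ω → ℝ} (h : ∀ᵐ ω ∂ν, (μ.rnDeriv ν ω).toReal ≠ 0) :
    (fun ω => (μ.rnDeriv ν ω).toReal * (f ω / (μ.rnDeriv ν ω).toReal)) =ᵐ[ν] f := by
  filter_upwards [h] with ω hω
  exact mul_div_cancel₀ _ hω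

variable [μ.HaveLebesgueDecomposition ν] [SigmaFinite μ] {f : Ω → ℝ}

lemma integrable_div_toReal_rnDeriv (hμν : μ ≪ ν) (h : ∀ᵐ ω ∂ν, (μ.rnDeriv ν ω).toReal ≠ 0)
    (hf : Integrable f ν) : Integrable (fun ω => f ω / (μ.rnDeriv ν ω).toReal) μ :=
  (integrable_toReal_rnDeriv_mul_iff hμν).1 (hf.congr (toReal_rnDeriv_mul_div_ae_eq h).symm)

lemma integral_div_toReal_rnDeriv (hμν : μ ≪ ν) (h : ∀ᵐ ω ∂ν, (μ.rnDeriv ν ω).toReal ≠ 0) :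
    ∫ ω, f ω / (μ.rnDeriv ν ω).toReal ∂μ = ∫ ω, f ω ∂ν := by
  rw [← integral_toReal_rnDeriv_mul hμν, integral_congr_ae (toReal_rnDeriv_mul_div_ae_eq h)]

end Measure

end MeasureTheory

open Measure in
theorem stmt7_general {Ω : Type*} [MeasurableSpace Ω] (μ ν : Measure Ω)
    [IsProbabilityMeasure μ] [IsProbabilityMeasure ν]
    (hac : μ ≪ ν)
    (hKL : Integrable (fun ω => log ((μ.rnDeriv ν ω).toReal)) μ)
    (hpos : ∀ᵐ ω ∂ν, 0 < (μ.rnDeriv ν ω).toReal)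
    (α : ℝ) (hα : 0 < α)
    (D : Ω → ℝ)
    (hDpos : ∀ᵐ ω ∂ν, 0 < D ω)
    (hlogD : Integrable (fun ω => log (D ω)) μ)
    (hD : Integrable D ν)
    (heq : α * ∫ ω, log (D ω) ∂μ - ∫ ω, D ω ∂ν =
      α * ∫ ω, log ((μ.rnDeriv ν ω).toReal) ∂μ + α * log α - α) :
    ∀ᵐ ω ∂ν, D ω = α * (μ.rnDeriv ν ω).toReal := by
  set r : Ω → ℝ := fun ω => (μ.rnDeriv ν ω).toReal
  have hr_ne : ∀ᵐ ω ∂ν, r ω ≠ 0 := hpos.mono fun _ h => h.ne'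
  have hνμ : ν ≪ μ := absolutelyContinuous_of_ae_rnDeriv_ne_zero hac <|
    hpos.mono fun _ h h0 => by simp [h0] at h
  have hlog_ratio : (fun ω => log (D ω / α / r ω)) =ᵐ[μ]
      fun ω => log (D ω) - log α - log (r ω) := by
    filter_upwards [hac.ae_le hDpos, hac.ae_le hpos] with ω hDω hrω
    rw [log_div (by positivity) hrω.ne', log_div hDω.ne' hα.ne']
  have hlogD_sub : Integrable (fun ω => log (D ω) - log α) μ := hlogD.sub (integrable_const _)
  have hratio_one : ∀ᵐ ω ∂μ, D ω / α / r ω = 1 := by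
    refine ae_eq_one_of_integral_log_eq_integral_sub_one ?_
      (integrable_div_toReal_rnDeriv hac hr_ne (hD.div_const α))
      ((hlogD_sub.sub hKL).congr hlog_ratio.symm) ?_
    · filter_upwards [hac.ae_le hDpos, hac.ae_le hpos] with ω hDω hrω
      positivity
    · rw [integral_congr_ae hlog_ratio, integral_sub hlogD_sub hKL,
        integral_sub hlogD (integrable_const _), integral_div_toReal_rnDeriv hac hr_ne,
        integral_div]
      simp only [integral_const, probReal_univ, smul_eq_mul, one_mul]
      field_simp
      linarith
  filter_upwards [hνμ.ae_le hratio_one, hpos] with ω hω hrω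
  rw [div_div, div_eq_one_iff_eq (by positivity)] at hω
  exact hω

/-- Uniqueness of the optimal discriminator. Let `μ, ν` be probability measures with
`μ ≪ ν`, finite KL divergence `KL(μ‖ν) = ∫ log (dμ/dν) dμ` (finiteness expressed as
integrability of `log (dμ/dν)` with respect to `μ`), and `dμ/dν > 0` `ν`-a.e. Let
`α > 0` and `D` measurable, `ν`-a.e. strictly positive, with `log ∘ D` `μ`-integrable
and `D` `ν`-integrable. If `α • ∫ log D dμ - ∫ D dν = α • KL(μ‖ν) + α log α - α`,
then `D = α • dμ/dν` `ν`-almost everywhere. -/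
theorem stmt7 {Ω : Type*} [MeasurableSpace Ω] (μ ν : Measure Ω)
    [IsProbabilityMeasure μ] [IsProbabilityMeasure ν]
    (hac : μ ≪ ν)
    (hKL : Integrable (fun ω => log ((μ.rnDeriv ν ω).toReal)) μ)
    (hpos : ∀ᵐ ω ∂ν, 0 < (μ.rnDeriv ν ω).toReal)
    (α : ℝ) (hα : 0 < α)
    (D : Ω → ℝ) (hDmeas : Measurable D)
    (hDpos : ∀ᵐ ω ∂ν, 0 < D ω)
    (hlogD : Integrable (fun ω => log (D ω)) μ)
    (hD : Integrable D ν)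
    (heq : α * ∫ ω, log (D ω) ∂μ - ∫ ω, D ω ∂ν =
      α * ∫ ω, log ((μ.rnDeriv ν ω).toReal) ∂μ + α * log α - α) :
    ∀ᵐ ω ∂ν, D ω = α * (μ.rnDeriv ν ω).toReal :=
  stmt7_general μ ν hac hKL hpos α hα D hDpos hlogD hD heq
end

section
/- Let X and Y be measurable spaces, κ a Markov kernel from X to Y, and μ a probability measure on X. Let π = μ ⊗ κ be the joint law on X × Y (the composition-product of μ and κ) and let ρ = μ × (κ ∘ μ) be the product of the marginals, where κ ∘ μ is the pushforward output law. Assume π ≪ ρ, the Radon–Nikodym derivative dπ/dρ is strictly positive ρ-almost everywhere, and KL(π‖ρ) < ∞. Then for every α > 0, the supremum over all measurable D : X × Y → ℝ that are strictly positive ρ-almost everywhere, with log∘D π-integrable and D ρ-integrable, of α·∫ log(D) dπ − ∫ D dρ equals α·(KL(π‖ρ) + log(α) − 1). -/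
open MeasureTheory ProbabilityTheory Real

/-! With `f = dP/dQ`, the pointwise bound `a log x - x ≤ a log a - a` (concavity of `log`,
applied with `a = α f ω`, `x = D ω`) integrates against `Q` to
`α ∫ log D dP - ∫ D dQ ≤ α ∫ log (α f) dP - ∫ α f dQ`, because `f` converts `Q`-integrals of
`f · g` into `P`-integrals of `g`. So `D = α f` is the optimal discriminator, and its value is
`α (KL(P‖Q) + log α - 1)` since `∫ f dQ = P(univ) = 1`. -/

lemma mul_log_sub_le_mul_log_sub {a x : ℝ} (ha : 0 ≤ a) (hx : 0 < x) :
    a * log x - x ≤ a * log a - a := by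
  rcases ha.eq_or_lt with rfl | ha
  · simp only [zero_mul, zero_sub, sub_zero, neg_nonpos]
    exact hx.le
  · have h := mul_le_mul_of_nonneg_left (log_le_sub_one_of_pos (div_pos hx ha)) ha.le
    rw [log_div hx.ne' ha.ne', mul_sub, mul_sub, mul_div_cancel₀ _ ha.ne'] at h
    linarith

section VariationalKL

variable {Ω : Type*} [MeasurableSpace Ω] {P Q : Measure Ω} [IsFiniteMeasure P]
  [SigmaFinite Q]

lemma integrable_mul_toReal_rnDeriv_mul_log_sub (hac : P ≪ Q) (α : ℝ) {D : Ω → ℝ}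
    (hlog : Integrable (fun ω => log (D ω)) P) (hD : Integrable D Q) :
    Integrable (fun ω => α * (P.rnDeriv Q ω).toReal * log (D ω) - D ω) Q := by
  have h := ((integrable_rnDeriv_smul_iff hac).2 hlog).const_mul α
  simp only [smul_eq_mul, ← mul_assoc] at h
  exact h.sub hD

lemma mul_integral_log_sub_integral_eq (hac : P ≪ Q) (α : ℝ) {D : Ω → ℝ}
    (hlog : Integrable (fun ω => log (D ω)) P) (hD : Integrable D Q) :
    α * ∫ ω, log (D ω) ∂P - ∫ ω, D ω ∂Q
      = ∫ ω, (α * (P.rnDeriv Q ω).toReal * log (D ω) - D ω) ∂Q := by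
  have h := (integrable_rnDeriv_smul_iff hac).2 hlog
  simp only [smul_eq_mul] at h
  simp_rw [mul_assoc]
  rw [integral_sub (h.const_mul α) hD, integral_const_mul, ← integral_rnDeriv_smul hac]
  simp only [smul_eq_mul]

lemma mul_integral_log_sub_integral_le (hac : P ≪ Q) {α : ℝ} (hα : 0 ≤ α) {D : Ω → ℝ}
    (hDpos : ∀ᵐ ω ∂Q, 0 < D ω) (hlog : Integrable (fun ω => log (D ω)) P)
    (hD : Integrable D Q)
    (hlog₀ : Integrable (fun ω => log (α * (P.rnDeriv Q ω).toReal)) P) :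
    α * ∫ ω, log (D ω) ∂P - ∫ ω, D ω ∂Q
      ≤ α * ∫ ω, log (α * (P.rnDeriv Q ω).toReal) ∂P
        - ∫ ω, α * (P.rnDeriv Q ω).toReal ∂Q := by
  have hD₀ : Integrable (fun ω => α * (P.rnDeriv Q ω).toReal) Q :=
    Measure.integrable_toReal_rnDeriv.const_mul α
  rw [mul_integral_log_sub_integral_eq hac α hlog hD,
    mul_integral_log_sub_integral_eq hac α hlog₀ hD₀]
  refine integral_mono_ae (integrable_mul_toReal_rnDeriv_mul_log_sub hac α hlog hD)
    (integrable_mul_toReal_rnDeriv_mul_log_sub hac α hlog₀ hD₀) ?_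
  filter_upwards [hDpos] with ω hω
  exact mul_log_sub_le_mul_log_sub (by positivity) hω

end VariationalKL

lemma integrable_log_mul_toReal_rnDeriv {Ω : Type*} [MeasurableSpace Ω] {P Q : Measure Ω}
    [IsFiniteMeasure P] {α : ℝ} (hα : 0 < α)
    (hpos : ∀ᵐ ω ∂P, 0 < (P.rnDeriv Q ω).toReal)
    (hKL : Integrable (fun ω => log ((P.rnDeriv Q ω).toReal)) P) :
    Integrable (fun ω => log (α * (P.rnDeriv Q ω).toReal)) P :=
  ((integrable_const (log α)).add hKL).congr <| by
    filter_upwards [hpos] with ω hω using (log_mul hα.ne' hω.ne').symm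

lemma mul_integral_log_mul_toReal_rnDeriv_sub {Ω : Type*} [MeasurableSpace Ω]
    {P Q : Measure Ω} [IsProbabilityMeasure P] [SigmaFinite Q] (hac : P ≪ Q)
    {α : ℝ} (hα : 0 < α)
    (hpos : ∀ᵐ ω ∂P, 0 < (P.rnDeriv Q ω).toReal)
    (hKL : Integrable (fun ω => log ((P.rnDeriv Q ω).toReal)) P) :
    α * ∫ ω, log (α * (P.rnDeriv Q ω).toReal) ∂P - ∫ ω, α * (P.rnDeriv Q ω).toReal ∂Q
      = α * ((∫ ω, log ((P.rnDeriv Q ω).toReal) ∂P) + log α - 1) := by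
  have hsplit : (fun ω => log (α * (P.rnDeriv Q ω).toReal))
      =ᵐ[P] fun ω => log α + log ((P.rnDeriv Q ω).toReal) := by
    filter_upwards [hpos] with ω hω using log_mul hα.ne' hω.ne'
  rw [integral_congr_ae hsplit, integral_add (integrable_const _) hKL, integral_const,
    integral_const_mul, Measure.integral_toReal_rnDeriv hac]
  simp only [probReal_univ, one_smul]
  ring

/-- Let `κ` be a Markov kernel from `X` to `Y` and `μ` a probability measure on `X`.
Let `P = μ ⊗ₘ κ` be the joint law and `Q = μ × (κ ∘ μ)` the product of the marginals,
where the output law `κ ∘ μ` is `μ.bind κ`. Assume `P ≪ Q`, `dP/dQ > 0` `Q`-a.e., and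
`KL(P‖Q) = ∫ log (dP/dQ) dP` is finite (expressed as integrability of `log (dP/dQ)`
with respect to `P`). Then for every `α > 0` the supremum over all measurable
`D : X × Y → ℝ`, `Q`-a.e. strictly positive, with `log ∘ D` `P`-integrable and `D`
`Q`-integrable, of `α • ∫ log D dP - ∫ D dQ` equals `α • (KL(P‖Q) + log α - 1)`
(as an attained supremum, `IsGreatest`). -/
theorem stmt8 {X Y : Type*} [MeasurableSpace X] [MeasurableSpace Y]
    (κ : Kernel X Y) [IsMarkovKernel κ]
    (μ : Measure X) [IsProbabilityMeasure μ]
    (P Q : Measure (X × Y))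
    (hP : P = μ ⊗ₘ κ)
    (hQ : Q = μ.prod (μ.bind (fun x => κ x)))
    (hac : P ≪ Q)
    (hpos : ∀ᵐ ω ∂Q, 0 < (P.rnDeriv Q ω).toReal)
    (hKL : Integrable (fun ω => log ((P.rnDeriv Q ω).toReal)) P)
    (α : ℝ) (hα : 0 < α) :
    IsGreatest
      {v : ℝ | ∃ D : X × Y → ℝ, Measurable D ∧ (∀ᵐ ω ∂Q, 0 < D ω) ∧
        Integrable (fun ω => log (D ω)) P ∧ Integrable D Q ∧
        v = α * ∫ ω, log (D ω) ∂P - ∫ ω, D ω ∂Q}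
      (α * ((∫ ω, log ((P.rnDeriv Q ω).toReal) ∂P) + log α - 1)) := by
  have : IsProbabilityMeasure P := hP ▸ inferInstance
  have : IsProbabilityMeasure Q := hQ ▸ inferInstance
  have hposP := hac.ae_le hpos
  have hlog₀ := integrable_log_mul_toReal_rnDeriv hα hposP hKL
  rw [← mul_integral_log_mul_toReal_rnDeriv_sub hac hα hposP hKL]
  refine ⟨⟨fun ω => α * (P.rnDeriv Q ω).toReal,
    measurable_const.mul (P.measurable_rnDeriv Q).ennreal_toReal, ?_, hlog₀,
    Measure.integrable_toReal_rnDeriv.const_mul α, rfl⟩, ?_⟩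
  · filter_upwards [hpos] with ω hω using mul_pos hα hω
  · rintro v ⟨D, -, hDpos, hlog, hD, rfl⟩
    exact mul_integral_log_sub_integral_le hac hα.le hDpos hlog hD hlog₀
end

section
/- Let X and Y be measurable spaces, κ a Markov kernel from X to Y, and M a set of probability measures μ on X such that for each μ ∈ M, π_μ = μ ⊗ κ ≪ ρ_μ = μ × (κ ∘ μ), dπ_μ/dρ_μ > 0 ρ_μ-a.e., and I(μ) := KL(π_μ‖ρ_μ) < ∞. Fix α > 0 and define V_α(μ) = sup_D [α·∫ log(D) dπ_μ − ∫ D dρ_μ], the supremum over admissible discriminators D. Then a measure μ* ∈ M attains the supremum of V_α over M if and only if μ* attains the supremum of I over M, i.e., the capacity-achieving input distributions coincide with the maximizers of the CORTICAL value function. -/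
open MeasureTheory ProbabilityTheory

/-- The joint law `μ ⊗ κ` of the channel input (with law `μ`) and the channel output. -/
noncomputable def jointLaw {X Y : Type*} [MeasurableSpace X] [MeasurableSpace Y]
    (κ : Kernel X Y) (μ : Measure X) : Measure (X × Y) :=
  μ ⊗ₘ κ

/-- The product `μ × (κ ∘ μ)` of the input law `μ` and the output law `κ ∘ μ = μ.bind κ`. -/
noncomputable def margLaw {X Y : Type*} [MeasurableSpace X] [MeasurableSpace Y]
    (κ : Kernel X Y) (μ : Measure X) : Measure (X × Y) :=
  μ.prod (μ.bind (fun x => κ x))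

/-- The mutual information `I(μ) = KL(μ⊗κ ‖ μ×(κ∘μ)) = ∫ log (dπ_μ/dρ_μ) dπ_μ`. -/
noncomputable def mutInfo {X Y : Type*} [MeasurableSpace X] [MeasurableSpace Y]
    (κ : Kernel X Y) (μ : Measure X) : ℝ :=
  ∫ ω, Real.log (((jointLaw κ μ).rnDeriv (margLaw κ μ) ω).toReal) ∂(jointLaw κ μ)

/-- The CORTICAL value function of an input law `μ`:
`V_α(μ) = sup_D [α ∫ log D dπ_μ - ∫ D dρ_μ]` over admissible discriminators `D`. -/
noncomputable def corticalValue {X Y : Type*} [MeasurableSpace X] [MeasurableSpace Y]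
    (κ : Kernel X Y) (α : ℝ) (μ : Measure X) : ℝ :=
  sSup {v : ℝ | ∃ D : X × Y → ℝ, Measurable D ∧
    (∀ᵐ ω ∂(margLaw κ μ), 0 < D ω) ∧
    Integrable (fun ω => Real.log (D ω)) (jointLaw κ μ) ∧
    Integrable D (margLaw κ μ) ∧
    v = α * ∫ ω, Real.log (D ω) ∂(jointLaw κ μ) - ∫ ω, D ω ∂(margLaw κ μ)}

/-!
With `r = dπ/dρ`, the change of measure `∫ f dπ = ∫ r f dρ` writes the discriminator objective as
`∫ (α r log D - D) dρ`. Pointwise `α r log D - D ≤ α r log (α r) - α r` (this is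
`log x ≤ x - 1` at `x = D / (α r)`), with equality at `D = α r`, which is admissible because
`r > 0` `ρ`-a.e. and `log r` is `π`-integrable. Hence `V_α(μ) = α I(μ) + α log α - α`, a strictly
increasing affine function of `I(μ)`, so both have the same maximisers over `M`.
-/

open Real

lemma Real.mul_log_sub_le_mul_log_self_sub {a d : ℝ} (ha : 0 ≤ a) (hd : 0 < d) :
    a * log d - d ≤ a * log a - a := by
  rcases ha.eq_or_lt with rfl | ha
  · simpa using hd.le
  have h := mul_le_mul_of_nonneg_left (log_le_sub_one_of_pos (div_pos hd ha)) ha.le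
  rw [log_div hd.ne' ha.ne', mul_sub_one, mul_div_cancel₀ d ha.ne'] at h
  linarith

section Discriminator

variable {Ω : Type*} [MeasurableSpace Ω] {μ ν : Measure Ω} {α : ℝ}

noncomputable def discriminatorObjective (μ ν : Measure Ω) (α : ℝ) (D : Ω → ℝ) : ℝ :=
  α * ∫ ω, log (D ω) ∂μ - ∫ ω, D ω ∂ν

def discriminatorValues (μ ν : Measure Ω) (α : ℝ) : Set ℝ :=
  {v : ℝ | ∃ D : Ω → ℝ, Measurable D ∧ (∀ᵐ ω ∂ν, 0 < D ω) ∧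
    Integrable (fun ω => log (D ω)) μ ∧ Integrable D ν ∧ v = discriminatorObjective μ ν α D}

noncomputable def optimalDiscriminator (μ ν : Measure Ω) (α : ℝ) (ω : Ω) : ℝ :=
  α * (μ.rnDeriv ν ω).toReal

lemma log_optimalDiscriminator_ae_eq [SigmaFinite μ] [SigmaFinite ν] (hac : μ ≪ ν)
    (hα : α ≠ 0) :
    (fun ω => log (optimalDiscriminator μ ν α ω)) =ᵐ[μ] fun ω => log α + llr μ ν ω := by
  filter_upwards [Measure.rnDeriv_pos hac, hac.ae_le (Measure.rnDeriv_ne_top μ ν)]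
    with ω hpos hfin
  exact log_mul hα (ENNReal.toReal_pos hpos.ne' hfin).ne'

lemma integrable_log_optimalDiscriminator [IsFiniteMeasure μ] [SigmaFinite ν] (hac : μ ≪ ν)
    (hα : α ≠ 0) (hKL : Integrable (llr μ ν) μ) :
    Integrable (fun ω => log (optimalDiscriminator μ ν α ω)) μ :=
  ((integrable_const (log α)).add hKL).congr (log_optimalDiscriminator_ae_eq hac hα).symm

lemma discriminatorObjective_optimalDiscriminator [IsProbabilityMeasure μ] [SigmaFinite ν]
    (hac : μ ≪ ν) (hα : α ≠ 0) (hKL : Integrable (llr μ ν) μ) :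
    discriminatorObjective μ ν α (optimalDiscriminator μ ν α) =
      α * ∫ ω, llr μ ν ω ∂μ + (α * log α - α) := by
  have hlog : ∫ ω, log (optimalDiscriminator μ ν α ω) ∂μ = log α + ∫ ω, llr μ ν ω ∂μ := by
    rw [integral_congr_ae (log_optimalDiscriminator_ae_eq hac hα),
      integral_add (integrable_const _) hKL]
    simp
  have hmass : ∫ ω, optimalDiscriminator μ ν α ω ∂ν = α := by
    simp [optimalDiscriminator, integral_const_mul, Measure.integral_toReal_rnDeriv hac]
  rw [discriminatorObjective, hlog, hmass]
  ring

lemma discriminatorObjective_le_optimalDiscriminator [IsFiniteMeasure μ] [SigmaFinite ν]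
    (hac : μ ≪ ν) (hα : 0 ≤ α) {D : Ω → ℝ} (hD : ∀ᵐ ω ∂ν, 0 < D ω)
    (hlogD : Integrable (fun ω => log (D ω)) μ) (hDint : Integrable D ν)
    (hlogD₀ : Integrable (fun ω => log (optimalDiscriminator μ ν α ω)) μ) :
    discriminatorObjective μ ν α D ≤
      discriminatorObjective μ ν α (optimalDiscriminator μ ν α) := by
  have hrewrite : ∀ E : Ω → ℝ, Integrable (fun ω => log (E ω)) μ → Integrable E ν →
      discriminatorObjective μ ν α E =
        ∫ ω, α * ((μ.rnDeriv ν ω).toReal * log (E ω)) - E ω ∂ν := by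
    intro E hlogE hE
    rw [discriminatorObjective, ← integral_toReal_rnDeriv_mul hac,
      integral_sub (((integrable_toReal_rnDeriv_mul_iff hac).mpr hlogE).const_mul α) hE,
      integral_const_mul]
  have hD₀int : Integrable (optimalDiscriminator μ ν α) ν :=
    Measure.integrable_toReal_rnDeriv.const_mul α
  rw [hrewrite D hlogD hDint, hrewrite _ hlogD₀ hD₀int]
  refine integral_mono_ae
    ((((integrable_toReal_rnDeriv_mul_iff hac).mpr hlogD).const_mul α).sub hDint)
    ((((integrable_toReal_rnDeriv_mul_iff hac).mpr hlogD₀).const_mul α).sub hD₀int) ?_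
  filter_upwards [hD] with ω hDω
  have h := Real.mul_log_sub_le_mul_log_self_sub
    (mul_nonneg hα (μ.rnDeriv ν ω).toReal_nonneg) hDω
  simp only [optimalDiscriminator]
  linarith

theorem isGreatest_discriminatorValues [IsProbabilityMeasure μ] [SigmaFinite ν]
    (hac : μ ≪ ν) (hpos : ∀ᵐ ω ∂ν, 0 < (μ.rnDeriv ν ω).toReal)
    (hKL : Integrable (llr μ ν) μ) (hα : 0 < α) :
    IsGreatest (discriminatorValues μ ν α) (α * ∫ ω, llr μ ν ω ∂μ + (α * log α - α)) := by
  have hlogD₀ := integrable_log_optimalDiscriminator hac hα.ne' hKL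
  refine ⟨⟨optimalDiscriminator μ ν α,
    (Measure.measurable_rnDeriv μ ν).ennreal_toReal.const_mul α,
    hpos.mono fun ω h => mul_pos hα h, hlogD₀, Measure.integrable_toReal_rnDeriv.const_mul α,
    (discriminatorObjective_optimalDiscriminator hac hα.ne' hKL).symm⟩, ?_⟩
  rintro v ⟨D, -, hD, hlogD, hDint, rfl⟩
  rw [← discriminatorObjective_optimalDiscriminator hac hα.ne' hKL]
  exact discriminatorObjective_le_optimalDiscriminator hac hα.le hD hlogD hDint hlogD₀

end Discriminator

theorem corticalValue_eq {X Y : Type*} [MeasurableSpace X] [MeasurableSpace Y]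
    {κ : Kernel X Y} [IsMarkovKernel κ] {μ : Measure X} [IsProbabilityMeasure μ] {α : ℝ}
    (hac : jointLaw κ μ ≪ margLaw κ μ)
    (hpos : ∀ᵐ ω ∂(margLaw κ μ), 0 < ((jointLaw κ μ).rnDeriv (margLaw κ μ) ω).toReal)
    (hKL : Integrable (llr (jointLaw κ μ) (margLaw κ μ)) (jointLaw κ μ)) (hα : 0 < α) :
    corticalValue κ α μ = α * mutInfo κ μ + (α * log α - α) := by
  have : IsProbabilityMeasure (jointLaw κ μ) := inferInstanceAs (IsProbabilityMeasure (μ ⊗ₘ κ))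
  have : IsProbabilityMeasure (margLaw κ μ) := inferInstanceAs (IsProbabilityMeasure (μ.prod _))
  exact (isGreatest_discriminatorValues hac hpos hKL hα).csSup_eq

/-- For a Markov kernel (channel) `κ` and a family `M` of admissible input probability
laws (each with `π_μ = μ ⊗ κ ≪ ρ_μ = μ × (κ ∘ μ)`, `dπ_μ/dρ_μ > 0` `ρ_μ`-a.e. and
finite mutual information `I(μ) = KL(π_μ‖ρ_μ)`), and any fixed `α > 0`: an input law
`μ* ∈ M` attains the supremum over `M` of the CORTICAL value `V_α` if and only if it
attains the supremum over `M` of the mutual information `I`; i.e., capacity-achieving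
input distributions coincide with maximizers of the CORTICAL value function. -/
theorem stmt10 {X Y : Type*} [MeasurableSpace X] [MeasurableSpace Y]
    (κ : Kernel X Y) [IsMarkovKernel κ]
    (M : Set (Measure X))
    (hprob : ∀ μ ∈ M, IsProbabilityMeasure μ)
    (hac : ∀ μ ∈ M, jointLaw κ μ ≪ margLaw κ μ)
    (hpos : ∀ μ ∈ M, ∀ᵐ ω ∂(margLaw κ μ),
      0 < (((jointLaw κ μ).rnDeriv (margLaw κ μ)) ω).toReal)
    (hKL : ∀ μ ∈ M, Integrable
      (fun ω => Real.log (((jointLaw κ μ).rnDeriv (margLaw κ μ) ω).toReal)) (jointLaw κ μ))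
    (α : ℝ) (hα : 0 < α)
    (μstar : Measure X) (hμstar : μstar ∈ M) :
    (∀ μ ∈ M, corticalValue κ α μ ≤ corticalValue κ α μstar) ↔
      (∀ μ ∈ M, mutInfo κ μ ≤ mutInfo κ μstar) := by
  have hvalue : ∀ μ ∈ M, corticalValue κ α μ = α * mutInfo κ μ + (α * log α - α) :=
    fun μ hμ => have := hprob μ hμ; corticalValue_eq (hac μ hμ) (hpos μ hμ) (hKL μ hμ) hα
  refine forall₂_congr fun μ hμ => ?_
  rw [hvalue μ hμ, hvalue μstar hμstar, add_le_add_iff_right, mul_le_mul_iff_right₀ hα]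
end
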